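/- arXiv:1605.02809 — 10 statements merged into one kernel-verified Lean document; each statement's English description precedes it below -/
import Mathlib

section
/- Let ψ : ℝ → ℝ be twice differentiable on an open set containing (0,1], with ψ(x) > 0 and ψ'(x) > 0 for all x ∈ (0,1], and ψ(1) = 1. Let κ ∈ ℝ. Then the following are equivalent: (i) ψ(x)·ψ''(x) = κ·ψ'(x)² for all x ∈ (0,1]; (ii) ψ'(x) = ψ'(1)·ψ(x)^κ for all x ∈ (0,1] (real power). -/
/-! The quantity `F = ψ' · ψ^(-κ)` has derivative `(ψ ψ'' - κ ψ'²) · ψ^(-κ-1)` wherever `ψ > 0`.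
So the Poisson-type condition says exactly that `F'` vanishes on `(0,1]`, i.e. that `F` is
constant there, and since `ψ 1 = 1` that constant is `ψ' 1`. -/

open Set

theorem HasDerivAt.mul_rpow_neg {f g : ℝ → ℝ} {f' g' x : ℝ} (κ : ℝ) (hf : HasDerivAt f f' x)
    (hg : HasDerivAt g g' x) (hx : f x ≠ 0) :
    HasDerivAt (fun y => g y * f y ^ (-κ)) ((f x * g' - κ * g x * f') * f x ^ (-κ - 1)) x := by
  refine (hg.mul (hf.rpow_const (p := -κ) (Or.inl hx))).congr_deriv ?_
  rw [show f x ^ (-κ) = f x ^ (-κ - 1) * f x by rw [← Real.rpow_add_one hx, sub_add_cancel]]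
  ring

theorem Convex.forall_deriv_eq_zero_iff_eq_const {E : Type*} [NormedAddCommGroup E]
    [NormedSpace ℝ E] {f f' : ℝ → E} {s : Set ℝ} {a : ℝ} (hs : Convex ℝ s)
    (hs' : UniqueDiffOn ℝ s) (hf : ∀ x ∈ s, HasDerivWithinAt f (f' x) s x) (ha : a ∈ s) :
    (∀ x ∈ s, f' x = 0) ↔ ∀ x ∈ s, f x = f a := by
  constructor
  · intro h x hx
    have := hs.norm_image_sub_le_of_norm_hasDerivWithin_le hf
      (fun y hy => (norm_eq_zero.2 (h y hy)).le) ha hx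
    rwa [zero_mul, norm_le_zero_iff, sub_eq_zero] at this
  · intro h x hx
    have hconst : HasDerivWithinAt f 0 s x :=
      (hasDerivWithinAt_const x s (f a)).congr h (h x hx)
    exact (hs' x hx).eq_deriv _ (hf x hx) hconst

theorem Real.mul_rpow_neg_eq_iff {a b c : ℝ} (κ : ℝ) (ha : 0 < a) :
    b * a ^ (-κ) = c ↔ b = c * a ^ κ := by
  rw [Real.rpow_neg ha.le, mul_inv_eq_iff_eq_mul₀ (Real.rpow_pos_of_pos ha κ).ne']

theorem poisson_type_iff_general (ψ : ℝ → ℝ) (U : Set ℝ) (hU : IsOpen U)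
    (hsub : Set.Ioc (0 : ℝ) 1 ⊆ U)
    (hd1 : DifferentiableOn ℝ ψ U) (hd2 : DifferentiableOn ℝ (deriv ψ) U)
    (hpos : ∀ x ∈ Set.Ioc (0 : ℝ) 1, 0 < ψ x)
    (hψ1 : ψ 1 = 1) (κ : ℝ) :
    (∀ x ∈ Set.Ioc (0 : ℝ) 1, ψ x * deriv (deriv ψ) x = κ * (deriv ψ x) ^ 2) ↔
      (∀ x ∈ Set.Ioc (0 : ℝ) 1, deriv ψ x = deriv ψ 1 * (ψ x) ^ κ) := by
  have hF : ∀ x ∈ Ioc (0 : ℝ) 1, HasDerivWithinAt (fun y => deriv ψ y * ψ y ^ (-κ))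
      ((ψ x * deriv (deriv ψ) x - κ * deriv ψ x * deriv ψ x) * ψ x ^ (-κ - 1)) (Ioc 0 1) x :=
    fun x hx =>
      have hx' := hU.mem_nhds (hsub hx)
      ((hd1.differentiableAt hx').hasDerivAt.mul_rpow_neg κ
        (hd2.differentiableAt hx').hasDerivAt (hpos x hx).ne').hasDerivWithinAt
  calc (∀ x ∈ Ioc (0 : ℝ) 1, ψ x * deriv (deriv ψ) x = κ * deriv ψ x ^ 2)
      ↔ ∀ x ∈ Ioc (0 : ℝ) 1,
          (ψ x * deriv (deriv ψ) x - κ * deriv ψ x * deriv ψ x) * ψ x ^ (-κ - 1) = 0 :=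
        forall₂_congr fun x hx => by
          rw [mul_eq_zero, sub_eq_zero, sq, mul_assoc,
            or_iff_left (Real.rpow_pos_of_pos (hpos x hx) _).ne']
    _ ↔ ∀ x ∈ Ioc (0 : ℝ) 1, deriv ψ x * ψ x ^ (-κ) = deriv ψ 1 * ψ 1 ^ (-κ) :=
        (convex_Ioc 0 1).forall_deriv_eq_zero_iff_eq_const (uniqueDiffOn_Ioc 0 1) hF
          (right_mem_Ioc.2 zero_lt_one)
    _ ↔ ∀ x ∈ Ioc (0 : ℝ) 1, deriv ψ x = deriv ψ 1 * ψ x ^ κ :=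
        forall₂_congr fun x hx => by
          rw [hψ1, Real.one_rpow, mul_one, Real.mul_rpow_neg_eq_iff κ (hpos x hx)]

/-- A univariate pgf `ψ`, twice differentiable on an open set containing `(0,1]`,
positive with positive derivative on `(0,1]` and with `ψ 1 = 1`, satisfies the
Poisson-type condition `ψ·ψ'' = κ·(ψ')²` on `(0,1]` if and only if
`ψ' x = ψ' 1 · (ψ x)^κ` on `(0,1]` (real power). -/
theorem poisson_type_iff (ψ : ℝ → ℝ) (U : Set ℝ) (hU : IsOpen U)
    (hsub : Set.Ioc (0 : ℝ) 1 ⊆ U)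
    (hd1 : DifferentiableOn ℝ ψ U) (hd2 : DifferentiableOn ℝ (deriv ψ) U)
    (hpos : ∀ x ∈ Set.Ioc (0 : ℝ) 1, 0 < ψ x)
    (hpos' : ∀ x ∈ Set.Ioc (0 : ℝ) 1, 0 < deriv ψ x)
    (hψ1 : ψ 1 = 1) (κ : ℝ) :
    (∀ x ∈ Set.Ioc (0 : ℝ) 1, ψ x * deriv (deriv ψ) x = κ * (deriv ψ x) ^ 2) ↔
      (∀ x ∈ Set.Ioc (0 : ℝ) 1, deriv ψ x = deriv ψ 1 * (ψ x) ^ κ) :=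
  poisson_type_iff_general ψ U hU hsub hd1 hd2 hpos hψ1 κ
end

section
/- Let r ≥ 1, let ψ : ℝ^r → ℝ be continuously differentiable with ψ(𝟏) = 1, let β ∈ ℝ^r, α_S > 0 and T > 0. Suppose S : [0,T] → ℝ, Θ : [0,T] → ℝ^r and SI : [0,T] → ℝ^r are such that for all t ∈ [0,T] and all j: ∂_jψ(Θ(t)) ≠ 0, Θ_j'(t) = −β_j·SI_j(t)/(α_S·∂_jψ(Θ(t))) and S'(t) = −∑_{j=1}^r β_j·SI_j(t), with Θ(0) = 𝟏 and S(0) = α_S. Then S(t) = α_S·ψ(Θ(t)) for all t ∈ [0,T]. -/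
/-!
Both `S` and `αS · ψ ∘ Θ` start at `αS` (because `ψ 𝟏 = 1`), and by the chain rule the
derivative of `ψ ∘ Θ` is `∑ⱼ Θⱼ' · ∂ⱼψ(Θ) = -(∑ⱼ βⱼ SIⱼ) / αS`: the factor `∂ⱼψ(Θ)` in the
denominator of `Θⱼ'` cancels. So the two functions have the same derivative on `[0, T]` and
therefore coincide there.
-/

/-- Partial derivative of `ψ : (Fin r → ℝ) → ℝ` in the `j`-th coordinate at `x`. -/
noncomputable def pd {r : ℕ} (j : Fin r) (ψ : (Fin r → ℝ) → ℝ) (x : Fin r → ℝ) : ℝ :=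
  deriv (fun t => ψ (Function.update x j t)) (x j)

theorem eq_on_Icc_of_hasDerivAt_eq {f g f' : ℝ → ℝ} {a b : ℝ}
    (hf : ∀ x ∈ Set.Icc a b, HasDerivAt f (f' x) x)
    (hg : ∀ x ∈ Set.Icc a b, HasDerivAt g (f' x) x) (hfg : f a = g a) :
    ∀ x ∈ Set.Icc a b, f x = g x :=
  eq_of_has_deriv_right_eq
    (fun x hx => (hf x (Set.mem_Icc_of_Ico hx)).hasDerivWithinAt)
    (fun x hx => (hg x (Set.mem_Icc_of_Ico hx)).hasDerivWithinAt)
    (fun x hx => (hf x hx).continuousAt.continuousWithinAt)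
    (fun x hx => (hg x hx).continuousAt.continuousWithinAt) hfg

section PartialDeriv

variable {r : ℕ} {ψ : (Fin r → ℝ) → ℝ}

theorem pd_eq_fderiv_single {x : Fin r → ℝ} (hψ : DifferentiableAt ℝ ψ x) (j : Fin r) :
    pd j ψ x = fderiv ℝ ψ x (Pi.single j 1) := by
  have hψ' : HasFDerivAt ψ (fderiv ℝ ψ x) (Function.update x j (x j)) := by
    simpa using hψ.hasFDerivAt
  exact (hψ'.comp_hasDerivAt (x j) (hasDerivAt_update x j (x j))).deriv

theorem fderiv_apply_eq_sum_pd {x : Fin r → ℝ} (hψ : DifferentiableAt ℝ ψ x)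
    (v : Fin r → ℝ) : fderiv ℝ ψ x v = ∑ j, v j * pd j ψ x := by
  conv_lhs => rw [pi_eq_sum_univ' v, map_sum]
  simp [pd_eq_fderiv_single hψ]

theorem DifferentiableAt.hasDerivAt_comp_sum_pd {Θ : ℝ → Fin r → ℝ} {v : Fin r → ℝ} {t : ℝ}
    (hψ : DifferentiableAt ℝ ψ (Θ t)) (hΘ : ∀ j, HasDerivAt (fun s => Θ s j) (v j) t) :
    HasDerivAt (fun s => ψ (Θ s)) (∑ j, v j * pd j ψ (Θ t)) t := by
  rw [← fderiv_apply_eq_sum_pd hψ]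
  exact hψ.hasFDerivAt.comp_hasDerivAt t (hasDerivAt_pi.2 hΘ)

end PartialDeriv

theorem susceptible_eq_psi_theta_general (r : ℕ) (ψ : (Fin r → ℝ) → ℝ)
    (hC : ContDiff ℝ 1 ψ) (hψ1 : ψ (fun _ => 1) = 1)
    (β : Fin r → ℝ) (αS : ℝ) (hαS : 0 < αS) (T : ℝ)
    (S : ℝ → ℝ) (Θ : ℝ → Fin r → ℝ) (SI : ℝ → Fin r → ℝ)
    (hpd : ∀ t ∈ Set.Icc (0 : ℝ) T, ∀ j, pd j ψ (Θ t) ≠ 0)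
    (hΘ : ∀ t ∈ Set.Icc (0 : ℝ) T, ∀ j, HasDerivAt (fun s => Θ s j)
        (-(β j * SI t j) / (αS * pd j ψ (Θ t))) t)
    (hS : ∀ t ∈ Set.Icc (0 : ℝ) T, HasDerivAt S (-(∑ j, β j * SI t j)) t)
    (hΘ0 : Θ 0 = fun _ => 1) (hS0 : S 0 = αS) :
    ∀ t ∈ Set.Icc (0 : ℝ) T, S t = αS * ψ (Θ t) := by
  refine eq_on_Icc_of_hasDerivAt_eq hS (fun t ht => ?_) (by rw [hS0, hΘ0, hψ1, mul_one])
  have hcancel : αS * ∑ j, -(β j * SI t j) / (αS * pd j ψ (Θ t)) * pd j ψ (Θ t)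
      = -(∑ j, β j * SI t j) := by
    rw [Finset.mul_sum, ← Finset.sum_neg_distrib]
    refine Finset.sum_congr rfl fun j _ => ?_
    field_simp [hαS.ne', hpd t ht j]
  rw [← hcancel]
  exact ((hC.differentiable one_ne_zero (Θ t)).hasDerivAt_comp_sum_pd (hΘ t ht)).const_mul αS

/-- Identity (eq:DS): in the large graph limit of the multilayer SIR process, if
`Θⱼ' = −βⱼ·SIⱼ/(α_S·∂ⱼψ(Θ))` and `S' = −∑ⱼ βⱼ·SIⱼ` with `Θ(0) = 𝟏`, `S(0) = α_S`,
then `S(t) = α_S·ψ(Θ(t))` on `[0,T]`. -/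
theorem susceptible_eq_psi_theta (r : ℕ) (hr : 1 ≤ r) (ψ : (Fin r → ℝ) → ℝ)
    (hC : ContDiff ℝ 1 ψ) (hψ1 : ψ (fun _ => 1) = 1)
    (β : Fin r → ℝ) (αS : ℝ) (hαS : 0 < αS) (T : ℝ) (hT : 0 < T)
    (S : ℝ → ℝ) (Θ : ℝ → Fin r → ℝ) (SI : ℝ → Fin r → ℝ)
    (hpd : ∀ t ∈ Set.Icc (0 : ℝ) T, ∀ j, pd j ψ (Θ t) ≠ 0)
    (hΘ : ∀ t ∈ Set.Icc (0 : ℝ) T, ∀ j, HasDerivAt (fun s => Θ s j)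
        (-(β j * SI t j) / (αS * pd j ψ (Θ t))) t)
    (hS : ∀ t ∈ Set.Icc (0 : ℝ) T, HasDerivAt S (-(∑ j, β j * SI t j)) t)
    (hΘ0 : Θ 0 = fun _ => 1) (hS0 : S 0 = αS) :
    ∀ t ∈ Set.Icc (0 : ℝ) T, S t = αS * ψ (Θ t) :=
  susceptible_eq_psi_theta_general r ψ hC hψ1 β αS hαS T S Θ SI hpd hΘ hS hΘ0 hS0
end

section
/- Let r ≥ 1, let ψ : ℝ^r → ℝ be twice continuously differentiable with ψ(𝟏) = 1, let β ∈ ℝ^r, α_S > 0, T > 0, and fix j ∈ {1,…,r} with ∂_jψ(𝟏) > 0. For x with ∂_iψ(x) ≠ 0 for all i, define κ̄_{jl}(x) = ψ(x)·∂²_{jl}ψ(x)/(∂_jψ(x)·∂_lψ(x)). Suppose Θ : [0,T] → ℝ^r, S : [0,T] → ℝ, SI : [0,T] → ℝ^r and SS_j : [0,T] → ℝ satisfy, for all t ∈ [0,T]: ψ(Θ(t)) > 0, ∂_iψ(Θ(t)) ≠ 0 for all i, Θ_i'(t) = −β_i·SI_i(t)/(α_S·∂_iψ(Θ(t))) for all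 i, S(t) = α_S·ψ(Θ(t)), and SS_j'(t) = −2·∑_{l=1}^r β_l·κ̄_{jl}(Θ(t))·SI_l(t)·SS_j(t)/S(t), with Θ(0) = 𝟏 and SS_j(0) = α_S²·∂_jψ(𝟏). Then SS_j(t) = α_S²·(∂_jψ(Θ(t)))²/∂_jψ(𝟏) for all t ∈ [0,T]. -/
open Set

section PartialDerivative

variable {r : ℕ}

theorem pd_eq_fderiv (j : Fin r) {f : (Fin r → ℝ) → ℝ} {x : Fin r → ℝ}
    (hf : DifferentiableAt ℝ f x) : pd j f x = fderiv ℝ f x (Pi.single j 1) := by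
  have hchain := (Function.update_eq_self j x ▸ hf.hasFDerivAt).comp_hasDerivAt (x j)
    (hasDerivAt_update x j (x j))
  rw [Function.update_eq_self] at hchain
  exact hchain.deriv

theorem DifferentiableAt.hasDerivAt_comp_sum_pd_s7 {f : (Fin r → ℝ) → ℝ} {γ : ℝ → Fin r → ℝ}
    {γ' : Fin r → ℝ} {t : ℝ} (hf : DifferentiableAt ℝ f (γ t))
    (hγ : ∀ i, HasDerivAt (fun s => γ s i) (γ' i) t) :
    HasDerivAt (fun s => f (γ s)) (∑ l, γ' l * pd l f (γ t)) t := by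
  refine (hf.hasFDerivAt.comp_hasDerivAt t (hasDerivAt_pi.mpr hγ)).congr_deriv ?_
  conv_lhs => rw [← Finset.univ_sum_single γ', map_sum]
  refine Finset.sum_congr rfl fun l _ => ?_
  rw [pd_eq_fderiv l hf, ← smul_eq_mul, ← map_smul, ← Pi.single_smul', smul_eq_mul, mul_one]

theorem contDiff_pd {n : WithTop ℕ∞} (j : Fin r) {ψ : (Fin r → ℝ) → ℝ}
    (hψ : ContDiff ℝ (n + 1) ψ) : ContDiff ℝ n (pd j ψ) := by
  have hpd : pd j ψ = fun x => fderiv ℝ ψ x (Pi.single j 1) :=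
    funext fun x => pd_eq_fderiv j (hψ.differentiable (by simp) x)
  rw [hpd]
  exact (hψ.fderiv_right le_rfl).clm_apply contDiff_const

end PartialDerivative

theorem div_pow_eq_of_hasDerivAt {f g g' : ℝ → ℝ} {a b : ℝ} (n : ℕ)
    (hg : ∀ t ∈ Icc a b, HasDerivAt g (g' t) t) (hg0 : ∀ t ∈ Icc a b, g t ≠ 0)
    (hf : ∀ t ∈ Icc a b, HasDerivAt f (n * f t * g' t / g t) t) :
    ∀ t ∈ Icc a b, f t / g t ^ n = f a / g a ^ n := by
  have hderiv : ∀ t ∈ Icc a b, HasDerivAt (fun s => f s / g s ^ n) 0 t := by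
    intro t ht
    refine ((hf t ht).fun_div ((hg t ht).fun_pow n) (pow_ne_zero n (hg0 t ht))).congr_deriv ?_
    rcases n with _ | m
    · simp
    · have := hg0 t ht
      rw [Nat.add_sub_cancel]
      field_simp
      ring
  exact constant_of_has_deriv_right_zero
    (fun t ht => (hderiv t ht).continuousAt.continuousWithinAt)
    fun t ht => (hderiv t (Ico_subset_Icc_self ht)).hasDerivWithinAt

theorem susceptible_susceptible_edges_eq_general (r : ℕ) (ψ : (Fin r → ℝ) → ℝ)
    (hC : ContDiff ℝ 2 ψ)
    (β : Fin r → ℝ) (αS : ℝ) (T : ℝ)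
    (j : Fin r)
    (Θ : ℝ → Fin r → ℝ) (S : ℝ → ℝ) (SI : ℝ → Fin r → ℝ) (SSj : ℝ → ℝ)
    (hψpos : ∀ t ∈ Set.Icc (0 : ℝ) T, 0 < ψ (Θ t))
    (hpd : ∀ t ∈ Set.Icc (0 : ℝ) T, ∀ i, pd i ψ (Θ t) ≠ 0)
    (hΘ : ∀ t ∈ Set.Icc (0 : ℝ) T, ∀ i, HasDerivAt (fun s => Θ s i)
        (-(β i * SI t i) / (αS * pd i ψ (Θ t))) t)
    (hSeq : ∀ t ∈ Set.Icc (0 : ℝ) T, S t = αS * ψ (Θ t))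
    (hSS : ∀ t ∈ Set.Icc (0 : ℝ) T, HasDerivAt SSj
        (-2 * ∑ l, β l * (ψ (Θ t) * pd l (pd j ψ) (Θ t) / (pd j ψ (Θ t) * pd l ψ (Θ t)))
            * SI t l * SSj t / S t) t)
    (hΘ0 : Θ 0 = fun _ => 1) (hSS0 : SSj 0 = αS ^ 2 * pd j ψ (fun _ => 1)) :
    ∀ t ∈ Set.Icc (0 : ℝ) T,
      SSj t = αS ^ 2 * (pd j ψ (Θ t)) ^ 2 / pd j ψ (fun _ => 1) := by
  have hdiff : Differentiable ℝ (pd j ψ) :=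
    (contDiff_pd j (n := 1) hC).differentiable one_ne_zero
  have hP' (t) (ht : t ∈ Icc 0 T) := (hdiff (Θ t)).hasDerivAt_comp_sum_pd_s7 (hΘ t ht)
  have hSS' (t) (ht : t ∈ Icc 0 T) : HasDerivAt SSj ((2 : ℕ) * SSj t *
      (∑ l, -(β l * SI t l) / (αS * pd l ψ (Θ t)) * pd l (pd j ψ) (Θ t)) / pd j ψ (Θ t)) t := by
    refine (hSS t ht).congr_deriv ?_
    have hψ := (hψpos t ht).ne'
    simp only [hSeq t ht, Finset.mul_sum, Finset.sum_div]
    refine Finset.sum_congr rfl fun l _ => ?_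
    field_simp
    ring
  intro t ht
  have hconst := div_pow_eq_of_hasDerivAt 2 hP' (fun t ht => hpd t ht j) hSS' t ht
  have hPt := hpd t ht j
  rw [hΘ0, hSS0] at hconst
  field_simp at hconst ⊢
  exact hconst

/-- Identity (eq:DSS): in the large graph limit of the multilayer SIR process, the
density of susceptible–susceptible `j`-edges satisfies
`SSⱼ(t) = α_S²·(∂ⱼψ(Θ(t)))²/∂ⱼψ(𝟏)`, where `κ̄_{jl}(x) = ψ(x)·∂²_{jl}ψ(x)/(∂ⱼψ(x)·∂ₗψ(x))`. -/
theorem susceptible_susceptible_edges_eq (r : ℕ) (hr : 1 ≤ r) (ψ : (Fin r → ℝ) → ℝ)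
    (hC : ContDiff ℝ 2 ψ) (hψ1 : ψ (fun _ => 1) = 1)
    (β : Fin r → ℝ) (αS : ℝ) (hαS : 0 < αS) (T : ℝ) (hT : 0 < T)
    (j : Fin r) (hj : 0 < pd j ψ (fun _ => 1))
    (Θ : ℝ → Fin r → ℝ) (S : ℝ → ℝ) (SI : ℝ → Fin r → ℝ) (SSj : ℝ → ℝ)
    (hψpos : ∀ t ∈ Set.Icc (0 : ℝ) T, 0 < ψ (Θ t))
    (hpd : ∀ t ∈ Set.Icc (0 : ℝ) T, ∀ i, pd i ψ (Θ t) ≠ 0)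
    (hΘ : ∀ t ∈ Set.Icc (0 : ℝ) T, ∀ i, HasDerivAt (fun s => Θ s i)
        (-(β i * SI t i) / (αS * pd i ψ (Θ t))) t)
    (hSeq : ∀ t ∈ Set.Icc (0 : ℝ) T, S t = αS * ψ (Θ t))
    (hSS : ∀ t ∈ Set.Icc (0 : ℝ) T, HasDerivAt SSj
        (-2 * ∑ l, β l * (ψ (Θ t) * pd l (pd j ψ) (Θ t) / (pd j ψ (Θ t) * pd l ψ (Θ t)))
            * SI t l * SSj t / S t) t)
    (hΘ0 : Θ 0 = fun _ => 1) (hSS0 : SSj 0 = αS ^ 2 * pd j ψ (fun _ => 1)) :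
    ∀ t ∈ Set.Icc (0 : ℝ) T,
      SSj t = αS ^ 2 * (pd j ψ (Θ t)) ^ 2 / pd j ψ (fun _ => 1) :=
  susceptible_susceptible_edges_eq_general r ψ hC β αS T j Θ S SI SSj hψpos hpd hΘ hSeq hSS hΘ0 hSS0
end

section
/- Let β > 0, κ ∈ ℝ, μ ≥ 0, α_S > 0 and T > 0. Suppose S, SS : [0,T] → ℝ are differentiable, SI : [0,T] → ℝ, with S(t) > 0 for all t, S'(t) = −β·SI(t), SS'(t) = −2βκ·SS(t)·SI(t)/S(t), S(0) = α_S and SS(0) = μ·α_S². Then SS(t) = α_S^{2(1−κ)}·μ·S(t)^{2κ} for all t ∈ [0,T] (real powers). -/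
/-!
Along a solution, `SS · S^(-2κ)` has derivative
`SS' S^(-2κ) - 2κ SS S' S^(-2κ-1) = 0`, since `SS' = 2κ SS S'/S` (with `S' = -β SI`).
So it is constant, equal to its initial value `μ α_S² · α_S^(-2κ)`.
-/

open Set

theorem hasDerivAt_mul_rpow_neg_of_hasDerivAt {y S : ℝ → ℝ} {k s' t : ℝ} (hSt : 0 < S t)
    (hS : HasDerivAt S s' t) (hy : HasDerivAt y (k * y t * s' / S t) t) :
    HasDerivAt (fun u => y u * S u ^ (-k)) 0 t := by
  refine (hy.mul (hS.rpow_const (Or.inl hSt.ne'))).congr_deriv ?_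
  rw [Real.rpow_sub_one hSt.ne']
  field_simp
  ring

theorem eq_mul_div_rpow_of_hasDerivAt {y S : ℝ → ℝ} {s' : ℝ → ℝ} {k a b : ℝ}
    (hSpos : ∀ t ∈ Icc a b, 0 < S t) (hS : ∀ t ∈ Icc a b, HasDerivAt S (s' t) t)
    (hy : ∀ t ∈ Icc a b, HasDerivAt y (k * y t * s' t / S t) t) :
    ∀ t ∈ Icc a b, y t = y a * (S t / S a) ^ k := by
  intro t ht
  have hderiv : ∀ u ∈ Icc a b, HasDerivAt (fun u => y u * S u ^ (-k)) 0 u := fun u hu =>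
    hasDerivAt_mul_rpow_neg_of_hasDerivAt (hSpos u hu) (hS u hu) (hy u hu)
  have hconst : y t * S t ^ (-k) = y a * S a ^ (-k) :=
    constant_of_has_deriv_right_zero (fun u hu => (hderiv u hu).continuousAt.continuousWithinAt)
      (fun u hu => (hderiv u (Ico_subset_Icc_self hu)).hasDerivWithinAt) t ht
  have hSa := hSpos a (left_mem_Icc.mpr (ht.1.trans ht.2))
  have hSt := hSpos t ht
  rw [Real.div_rpow hSt.le hSa.le, Real.rpow_neg hSt.le, Real.rpow_neg hSa.le] at *
  have hSt_pow := (Real.rpow_pos_of_pos hSt k).ne'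
  field_simp at hconst ⊢
  linear_combination hconst

theorem pairwise_SS_invariant_general (β κ μ αS T : ℝ)
    (hαS : 0 < αS)
    (S SS : ℝ → ℝ) (SI : ℝ → ℝ)
    (hSpos : ∀ t ∈ Set.Icc (0 : ℝ) T, 0 < S t)
    (hS : ∀ t ∈ Set.Icc (0 : ℝ) T, HasDerivAt S (-(β * SI t)) t)
    (hSS : ∀ t ∈ Set.Icc (0 : ℝ) T, HasDerivAt SS (-2 * β * κ * SS t * SI t / S t) t)
    (hS0 : S 0 = αS) (hSS0 : SS 0 = μ * αS ^ 2) :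
    ∀ t ∈ Set.Icc (0 : ℝ) T, SS t = αS ^ (2 * (1 - κ)) * μ * S t ^ (2 * κ) := by
  intro t ht
  have hSS' : ∀ u ∈ Icc (0 : ℝ) T, HasDerivAt SS (2 * κ * SS u * -(β * SI u) / S u) u :=
    fun u hu => (hSS u hu).congr_deriv (by ring)
  rw [eq_mul_div_rpow_of_hasDerivAt hSpos hS hSS' t ht, hS0, hSS0,
    Real.div_rpow (hSpos t ht).le hαS.le]
  have hαS_pow : αS ^ 2 / αS ^ (2 * κ) = αS ^ (2 * (1 - κ)) := by
    rw [← Real.rpow_natCast, ← Real.rpow_sub hαS]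
    ring_nf
  rw [← hαS_pow]
  ring

/-- Invariant of the pairwise SIR model of Rand: in the system `S' = −β·SI`,
`SS' = −2βκ·SS·SI/S` with `S(0) = α_S`, `SS(0) = μ·α_S²`, one has
`SS = α_S^(2(1−κ))·μ·S^(2κ)` (real powers). -/
theorem pairwise_SS_invariant (β κ μ αS T : ℝ) (hβ : 0 < β) (hμ : 0 ≤ μ)
    (hαS : 0 < αS) (hT : 0 < T)
    (S SS : ℝ → ℝ) (SI : ℝ → ℝ)
    (hSpos : ∀ t ∈ Set.Icc (0 : ℝ) T, 0 < S t)
    (hS : ∀ t ∈ Set.Icc (0 : ℝ) T, HasDerivAt S (-(β * SI t)) t)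
    (hSS : ∀ t ∈ Set.Icc (0 : ℝ) T, HasDerivAt SS (-2 * β * κ * SS t * SI t / S t) t)
    (hS0 : S 0 = αS) (hSS0 : SS 0 = μ * αS ^ 2) :
    ∀ t ∈ Set.Icc (0 : ℝ) T, SS t = αS ^ (2 * (1 - κ)) * μ * S t ^ (2 * κ) :=
  pairwise_SS_invariant_general β κ μ αS T hαS S SS SI hSpos hS hSS hS0 hSS0
end

section
/- Let β > 0, γ ≥ 0, κ ∈ ℝ with κ ≠ 1, μ ≥ 0, α_S > 0, α_I ≥ 0 and T > 0. Suppose S, SI : [0,T] → ℝ are differentiable with S(t) > 0 and SI(t) > 0 for all t ∈ [0,T], satisfying S'(t) = −β·SI(t) and SI'(t) = βκ·(SS(t)·SI(t) − SI(t)²)/S(t) − (β+γ)·SI(t), where SS(t) := α_S^{2(1−κ)}·μ·S(t)^{2κ}, with S(0) = α_S and SI(0) = α_S·α_I·μ. Then for all t ∈ [0,T] (real powers): SI(t) = ((β+γ)/(β(1−κ)))·S(t) − μ·α_S^{2(1−κ)}·S(t)^{2κ} − ( ((β+γ)/(β(1−κ)))·α_S^{1−κ} − μ·α_S^{2−κ}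 − α_S^{1−κ}·α_I·μ )·S(t)^{κ}. -/
/-!
With `C₁ = (β+γ)/(β(1-κ))` and `c = α_S^{2(1-κ)} μ`, the quantity `C₁ S^{1-κ} - c S^κ - [SI] S^{-κ}`
is a first integral. Indeed, dividing the `[SI]`-equation by `dS/dt = -β[SI]` gives an ODE for `[SI]`
as a function of `S` that is linear, with integrating factor `S^{-κ}`; the resulting right-hand side
`(β+γ)/β S^{-κ} - κ c S^{κ-1}` integrates to `C₁ S^{1-κ} - c S^κ` because `κ ≠ 1`.
The constant is fixed by the initial values.
-/

open Set

noncomputable def pairwiseFirstIntegral (β γ κ c x y : ℝ) : ℝ :=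
  (β + γ) / (β * (1 - κ)) * x ^ (1 - κ) - c * x ^ κ - y * x ^ (-κ)

theorem hasDerivAt_pairwiseFirstIntegral {β γ κ c t : ℝ} {S SI : ℝ → ℝ}
    (hβ : β ≠ 0) (hκ : κ ≠ 1) (hSt : 0 < S t)
    (hS : HasDerivAt S (-(β * SI t)) t)
    (hSI : HasDerivAt SI
      (β * κ * (c * S t ^ (2 * κ) * SI t - SI t ^ 2) / S t - (β + γ) * SI t) t) :
    HasDerivAt (fun u => pairwiseFirstIntegral β γ κ c (S u) (SI u)) 0 t := by
  have h1κ : 1 - κ ≠ 0 := sub_ne_zero_of_ne hκ.symm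
  have hpow (r : ℝ) : HasDerivAt (fun u => S u ^ r) (-(β * SI t) * r * S t ^ (r - 1)) t :=
    hS.rpow_const (Or.inl hSt.ne')
  refine ((((hpow (1 - κ)).const_mul _).sub ((hpow κ).const_mul c)).sub
    (hSI.mul (hpow (-κ)))).congr_deriv ?_
  have e2κ : S t ^ (2 * κ) = (S t ^ κ) ^ 2 := by
    rw [mul_comm, Real.rpow_mul hSt.le, Real.rpow_two]
  rw [sub_sub_cancel_left, Real.rpow_sub_one hSt.ne', Real.rpow_sub_one hSt.ne',
    Real.rpow_neg hSt.le, e2κ]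
  field_simp
  ring

theorem eq_of_pairwiseFirstIntegral_eq {β γ κ c x y K : ℝ} (hx : 0 < x)
    (hK : pairwiseFirstIntegral β γ κ c x y = K) :
    y = (β + γ) / (β * (1 - κ)) * x - c * x ^ (2 * κ) - K * x ^ κ := by
  rw [← hK, pairwiseFirstIntegral, Real.rpow_sub hx, Real.rpow_one, Real.rpow_neg hx.le,
    mul_comm 2 κ, Real.rpow_mul hx.le, Real.rpow_two]
  field_simp
  ring

theorem pairwiseFirstIntegral_initial {β γ κ μ αS αI : ℝ} (hαS : 0 < αS) :
    pairwiseFirstIntegral β γ κ (αS ^ (2 * (1 - κ)) * μ) αS (αS * αI * μ) =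
      (β + γ) / (β * (1 - κ)) * αS ^ (1 - κ) - μ * αS ^ (2 - κ) - αS ^ (1 - κ) * αI * μ := by
  have e1 : αS ^ (2 * (1 - κ)) * αS ^ κ = αS ^ (2 - κ) := by
    rw [← Real.rpow_add hαS]; ring_nf
  have e2 : αS * αS ^ (-κ) = αS ^ (1 - κ) := by
    rw [sub_eq_add_neg, Real.rpow_add hαS, Real.rpow_one]
  rw [pairwiseFirstIntegral, ← e1, ← e2]
  ring

theorem eq_left_of_hasDerivAt_zero {f : ℝ → ℝ} {a b : ℝ}
    (hf : ∀ t ∈ Icc a b, HasDerivAt f 0 t) : ∀ t ∈ Icc a b, f t = f a :=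
  constant_of_has_deriv_right_zero (fun t ht => (hf t ht).continuousAt.continuousWithinAt)
    fun t ht => (hf t (Ico_subset_Icc_self ht)).hasDerivWithinAt

theorem pairwise_SI_explicit_ne_one_general (β γ κ μ αS αI T : ℝ)
    (hβ : 0 < β) (hκ : κ ≠ 1)
    (hαS : 0 < αS)
    (S SI : ℝ → ℝ)
    (hSpos : ∀ t ∈ Set.Icc (0 : ℝ) T, 0 < S t)
    (hS : ∀ t ∈ Set.Icc (0 : ℝ) T, HasDerivAt S (-(β * SI t)) t)
    (hSI : ∀ t ∈ Set.Icc (0 : ℝ) T, HasDerivAt SI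
        (β * κ * ((αS ^ (2 * (1 - κ)) * μ * S t ^ (2 * κ)) * SI t - SI t ^ 2) / S t
          - (β + γ) * SI t) t)
    (hS0 : S 0 = αS) (hSI0 : SI 0 = αS * αI * μ) :
    ∀ t ∈ Set.Icc (0 : ℝ) T,
      SI t = (β + γ) / (β * (1 - κ)) * S t - μ * αS ^ (2 * (1 - κ)) * S t ^ (2 * κ)
        - ((β + γ) / (β * (1 - κ)) * αS ^ (1 - κ) - μ * αS ^ (2 - κ)
            - αS ^ (1 - κ) * αI * μ) * S t ^ κ := by
  intro t ht
  have hconst := eq_left_of_hasDerivAt_zero (fun s hs =>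
    hasDerivAt_pairwiseFirstIntegral hβ.ne' hκ (hSpos s hs) (hS s hs) (hSI s hs)) t ht
  rw [hS0, hSI0, pairwiseFirstIntegral_initial hαS] at hconst
  rw [eq_of_pairwiseFirstIntegral_eq (hSpos t ht) hconst]
  ring

/-- Explicit solution (eq:SI), case `κ ≠ 1`, of the pairwise SIR model of Rand:
`SI` can be expressed explicitly as a function of `S` (real powers). -/
theorem pairwise_SI_explicit_ne_one (β γ κ μ αS αI T : ℝ)
    (hβ : 0 < β) (hγ : 0 ≤ γ) (hκ : κ ≠ 1) (hμ : 0 ≤ μ)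
    (hαS : 0 < αS) (hαI : 0 ≤ αI) (hT : 0 < T)
    (S SI : ℝ → ℝ)
    (hSpos : ∀ t ∈ Set.Icc (0 : ℝ) T, 0 < S t)
    (hSIpos : ∀ t ∈ Set.Icc (0 : ℝ) T, 0 < SI t)
    (hS : ∀ t ∈ Set.Icc (0 : ℝ) T, HasDerivAt S (-(β * SI t)) t)
    (hSI : ∀ t ∈ Set.Icc (0 : ℝ) T, HasDerivAt SI
        (β * κ * ((αS ^ (2 * (1 - κ)) * μ * S t ^ (2 * κ)) * SI t - SI t ^ 2) / S t
          - (β + γ) * SI t) t)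
    (hS0 : S 0 = αS) (hSI0 : SI 0 = αS * αI * μ) :
    ∀ t ∈ Set.Icc (0 : ℝ) T,
      SI t = (β + γ) / (β * (1 - κ)) * S t - μ * αS ^ (2 * (1 - κ)) * S t ^ (2 * κ)
        - ((β + γ) / (β * (1 - κ)) * αS ^ (1 - κ) - μ * αS ^ (2 - κ)
            - αS ^ (1 - κ) * αI * μ) * S t ^ κ :=
  pairwise_SI_explicit_ne_one_general β γ κ μ αS αI T hβ hκ hαS S SI hSpos hS hSI hS0 hSI0
end

section
/- Let β > 0, γ ≥ 0, μ ≥ 0, α_S > 0, α_I ≥ 0 and T > 0. Suppose S, SI : [0,T] → ℝ are differentiable with S(t) > 0 and SI(t) > 0 for all t ∈ [0,T], satisfying S'(t) = −β·SI(t) and SI'(t) = β·(SS(t)·SI(t) − SI(t)²)/S(t) − (β+γ)·SI(t), where SS(t) := μ·S(t)², with S(0) = α_S and SI(0) = α_S·α_I·μ. Then for all t ∈ [0,T]: SI(t) = ((β+γ)/β)·S(t)·log(S(t)) − μ·S(t)² − ( ((β+γ)/β)·log(α_S) − μ·α_S − α_I·μ )·S(t). -/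
/-!
Along every trajectory the quantity `[SI]/S - ((β + γ)/β) log S + μ S` is conserved: with
`[SS] = μ S²` its derivative vanishes identically. Evaluating it at `t = 0` and solving for `[SI]`
gives the explicit formula.
-/

open Set

theorem eq_of_hasDerivAt_zero_on_Icc {E : Type*} [NormedAddCommGroup E] [NormedSpace ℝ E]
    {f : ℝ → E} {a b : ℝ} (hf : ∀ x ∈ Icc a b, HasDerivAt f 0 x) :
    ∀ x ∈ Icc a b, f x = f a :=
  constant_of_has_deriv_right_zero
    (fun x hx => (hf x hx).continuousAt.continuousWithinAt)
    (fun x hx => (hf x (Ico_subset_Icc_self hx)).hasDerivWithinAt)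

noncomputable def pairwiseInvariant (β γ μ s si : ℝ) : ℝ :=
  si / s - ((β + γ) / β * Real.log s - μ * s)

theorem hasDerivAt_pairwiseInvariant {β γ μ t : ℝ} {S SI : ℝ → ℝ} (hβ : β ≠ 0) (hSt : S t ≠ 0)
    (hS : HasDerivAt S (-(β * SI t)) t)
    (hSI : HasDerivAt SI (β * ((μ * S t ^ 2) * SI t - SI t ^ 2) / S t - (β + γ) * SI t) t) :
    HasDerivAt (fun t => pairwiseInvariant β γ μ (S t) (SI t)) 0 t := by
  have hderiv := (hSI.div hS hSt).sub (((hS.log hSt).const_mul ((β + γ) / β)).sub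
    (hS.const_mul μ))
  have hzero : ((β * (μ * S t ^ 2 * SI t - SI t ^ 2) / S t - (β + γ) * SI t) * S t
      - SI t * -(β * SI t)) / S t ^ 2 - ((β + γ) / β * (-(β * SI t) / S t) - μ * -(β * SI t))
      = 0 := by
    field_simp
    ring
  rw [hzero] at hderiv
  exact hderiv

theorem eq_of_pairwiseInvariant_eq {β γ μ s si c : ℝ} (hs : s ≠ 0)
    (h : pairwiseInvariant β γ μ s si = c) :
    si = (β + γ) / β * s * Real.log s - μ * s ^ 2 + c * s := by
  rw [← h, pairwiseInvariant]
  field_simp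
  ring

theorem pairwiseInvariant_initial {β γ μ αS αI : ℝ} (hαS : αS ≠ 0) :
    pairwiseInvariant β γ μ αS (αS * αI * μ) = -((β + γ) / β * Real.log αS - μ * αS - αI * μ) := by
  rw [pairwiseInvariant]
  field_simp
  ring

theorem pairwise_SI_explicit_eq_one_general (β γ μ αS αI T : ℝ)
    (hβ : 0 < β)
    (hαS : 0 < αS)
    (S SI : ℝ → ℝ)
    (hSpos : ∀ t ∈ Set.Icc (0 : ℝ) T, 0 < S t)
    (hS : ∀ t ∈ Set.Icc (0 : ℝ) T, HasDerivAt S (-(β * SI t)) t)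
    (hSI : ∀ t ∈ Set.Icc (0 : ℝ) T, HasDerivAt SI
        (β * ((μ * S t ^ 2) * SI t - SI t ^ 2) / S t - (β + γ) * SI t) t)
    (hS0 : S 0 = αS) (hSI0 : SI 0 = αS * αI * μ) :
    ∀ t ∈ Set.Icc (0 : ℝ) T,
      SI t = (β + γ) / β * S t * Real.log (S t) - μ * S t ^ 2
        - ((β + γ) / β * Real.log αS - μ * αS - αI * μ) * S t := by
  intro t ht
  have hconst := eq_of_hasDerivAt_zero_on_Icc
    (fun x hx => hasDerivAt_pairwiseInvariant hβ.ne' (hSpos x hx).ne' (hS x hx) (hSI x hx)) t ht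
  rw [hS0, hSI0, pairwiseInvariant_initial hαS.ne'] at hconst
  rw [eq_of_pairwiseInvariant_eq (hSpos t ht).ne' hconst]
  ring

/-- Explicit solution (eq:SI), case `κ = 1`, of the pairwise SIR model of Rand:
`SI` can be expressed explicitly as a function of `S`. -/
theorem pairwise_SI_explicit_eq_one (β γ μ αS αI T : ℝ)
    (hβ : 0 < β) (hγ : 0 ≤ γ) (hμ : 0 ≤ μ)
    (hαS : 0 < αS) (hαI : 0 ≤ αI) (hT : 0 < T)
    (S SI : ℝ → ℝ)
    (hSpos : ∀ t ∈ Set.Icc (0 : ℝ) T, 0 < S t)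
    (hSIpos : ∀ t ∈ Set.Icc (0 : ℝ) T, 0 < SI t)
    (hS : ∀ t ∈ Set.Icc (0 : ℝ) T, HasDerivAt S (-(β * SI t)) t)
    (hSI : ∀ t ∈ Set.Icc (0 : ℝ) T, HasDerivAt SI
        (β * ((μ * S t ^ 2) * SI t - SI t ^ 2) / S t - (β + γ) * SI t) t)
    (hS0 : S 0 = αS) (hSI0 : SI 0 = αS * αI * μ) :
    ∀ t ∈ Set.Icc (0 : ℝ) T,
      SI t = (β + γ) / β * S t * Real.log (S t) - μ * S t ^ 2
        - ((β + γ) / β * Real.log αS - μ * αS - αI * μ) * S t :=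
  pairwise_SI_explicit_eq_one_general β γ μ αS αI T hβ hαS S SI hSpos hS hSI hS0 hSI0
end

section
/- Let β_C, β_H, μ_C, μ_H, γ, δ, η, κ_CC, κ_HH, κ_CH be real numbers with d_C := β_C + γ + δ ≠ 0, d_H := β_H + γ ≠ 0 and d_E := η + γ ≠ 0. Let M be the 4×4 real matrix with rows: row 1 = (0, β_C/d_C, β_H/d_H, β_H·η/(d_H·d_E)); row 2 = (0, β_C·κ_CC·μ_C/d_C, β_H·κ_CH·μ_C/d_H, β_H·κ_CH·μ_C·η/(d_H·d_E)); row 3 = (0, 0, 0, 0); row 4 = (0, β_C·κ_CH·μ_H/d_C, β_H·κ_HH·μ_H/d_H, β_H·κ_HH·μ_H·η/(d_H·d_E)). Then the characteristic polynomial of M equals X²·( X² − (R_C + R_H)·X + (κ_CC·κ_HH − κ_CH²)·β_C·β_H·μ_C·μ_H·η/(d_C·d_H·d_E) ), where R_C = β_C·κ_CC·μ_C/d_C and R_H = β_H·κ_HH·μ_H·η/(d_H·d_E). -/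
open Polynomial

theorem Matrix.charpoly_fin_four_of_col_zero_eq_zero_of_row_two_eq_zero {R : Type*} [CommRing R]
    (a₂ a₃ a₄ b₂ b₃ b₄ d₂ d₃ d₄ : R) :
    (!![0, a₂, a₃, a₄; 0, b₂, b₃, b₄; 0, 0, 0, 0; 0, d₂, d₃, d₄] :
      Matrix (Fin 4) (Fin 4) R).charpoly
      = X ^ 2 * (X ^ 2 - C (b₂ + d₄) * X + C (b₂ * d₄ - b₄ * d₂)) := by
  rw [Matrix.charpoly, Matrix.det_succ_column_zero]
  simp [Fin.sum_univ_succ, Matrix.det_fin_three, Matrix.charmatrix_apply, Matrix.submatrix]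
  ring

theorem next_generation_charpoly_general (βC βH μC μH γ δ η κCC κHH κCH : ℝ) :
    let dC := βC + γ + δ
    let dH := βH + γ
    let dE := η + γ
    let M : Matrix (Fin 4) (Fin 4) ℝ :=
      !![0, βC / dC, βH / dH, βH * η / (dH * dE);
         0, βC * κCC * μC / dC, βH * κCH * μC / dH, βH * κCH * μC * η / (dH * dE);
         0, 0, 0, 0;
         0, βC * κCH * μH / dC, βH * κHH * μH / dH, βH * κHH * μH * η / (dH * dE)]
    M.charpoly = X ^ 2 * (X ^ 2
      - C (βC * κCC * μC / dC + βH * κHH * μH * η / (dH * dE)) * X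
      + C ((κCC * κHH - κCH ^ 2) * βC * βH * μC * μH * η / (dC * dH * dE))) := by
  intro dC dH dE M
  clear_value dC dH dE
  rw [Matrix.charpoly_fin_four_of_col_zero_eq_zero_of_row_two_eq_zero]
  congr 3
  ring

/-- Characteristic polynomial of the next-generation matrix `F·V⁻¹` of the two-layer
community-healthcare SIdaR model: it equals
`X²·(X² − (R_C + R_H)·X + (κ_CC·κ_HH − κ_CH²)·β_C·β_H·μ_C·μ_H·η/(d_C·d_H·d_E))`. -/
theorem next_generation_charpoly (βC βH μC μH γ δ η κCC κHH κCH : ℝ)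
    (hdC : βC + γ + δ ≠ 0) (hdH : βH + γ ≠ 0) (hdE : η + γ ≠ 0) :
    let dC := βC + γ + δ
    let dH := βH + γ
    let dE := η + γ
    let M : Matrix (Fin 4) (Fin 4) ℝ :=
      !![0, βC / dC, βH / dH, βH * η / (dH * dE);
         0, βC * κCC * μC / dC, βH * κCH * μC / dH, βH * κCH * μC * η / (dH * dE);
         0, 0, 0, 0;
         0, βC * κCH * μH / dC, βH * κHH * μH / dH, βH * κHH * μH * η / (dH * dE)]
    M.charpoly = X ^ 2 * (X ^ 2
      - C (βC * κCC * μC / dC + βH * κHH * μH * η / (dH * dE)) * X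
      + C ((κCC * κHH - κCH ^ 2) * βC * βH * μC * μH * η / (dC * dH * dE))) :=
  next_generation_charpoly_general βC βH μC μH γ δ η κCC κHH κCH
end

section
/- Let n ≥ 1, let V be an invertible n×n real matrix, let Π, b ∈ ℝⁿ, let β ∈ ℝ, and let T > 0. Suppose x : [0,T] → ℝⁿ and y : [0,T] → ℝ are differentiable with y(t) > 0 for all t ∈ [0,T], and satisfy x'(t) = β·y(t)·(b ⋅ x(t))·Π − V·x(t) and y'(t) = −β·y(t)·(b ⋅ x(t)) for all t ∈ [0,T], where ⋅ denotes the dot product and V·x matrix–vector multiplication. Then for all t ∈ [0,T]: log(y(t)/y(0)) = −β·( b ⋅ V⁻¹·( Π·(y(0) − y(t)) + (x(0) − x(t)) ) ). -/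
/-!
Along solutions, `(d/dt) log y = -β (b ⬝ᵥ x)`, while the vector `y • Π + x` has derivative
`-V x`. Pairing the latter with the row vector `c = b V⁻¹` turns it into `-(b ⬝ᵥ x)` as well, so
`log y - β c ⬝ᵥ (y • Π + x)` is a first integral; comparing its values at `0` and `t` gives the
identity.
-/

open Matrix Set

variable {ι : Type*} [Fintype ι]

theorem HasDerivAt.const_dotProduct (c : ι → ℝ) {u : ℝ → ι → ℝ} {u' : ι → ℝ} {t : ℝ}
    (h : HasDerivAt u u' t) : HasDerivAt (fun s => c ⬝ᵥ u s) (c ⬝ᵥ u') t := by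
  simp only [dotProduct]
  exact HasDerivAt.fun_sum fun i _ => ((hasDerivAt_pi.mp h) i).const_mul (c i)

theorem eq_of_forall_hasDerivAt_zero_Icc {E : Type*} [NormedAddCommGroup E] [NormedSpace ℝ E]
    {f : ℝ → E} {a b : ℝ} (hf : ∀ s ∈ Icc a b, HasDerivAt f 0 s) :
    ∀ t ∈ Icc a b, f t = f a :=
  constant_of_has_deriv_right_zero (fun s hs => (hf s hs).continuousAt.continuousWithinAt)
    fun s hs => (hf s (Ico_subset_Icc_self hs)).hasDerivWithinAt

noncomputable def arinoInvariant (β : ℝ) (c Pv : ι → ℝ) (x : ℝ → ι → ℝ) (y : ℝ → ℝ) (s : ℝ) :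
    ℝ :=
  Real.log (y s) - β * (c ⬝ᵥ (y s • Pv + x s))

theorem hasDerivAt_arinoInvariant {V : Matrix ι ι ℝ} {Pv b c : ι → ℝ} {β t : ℝ}
    (hc : c ᵥ* V = b) {x : ℝ → ι → ℝ} {y : ℝ → ℝ} (hyt : y t ≠ 0)
    (hx : HasDerivAt x ((β * y t * (b ⬝ᵥ x t)) • Pv - V *ᵥ x t) t)
    (hy : HasDerivAt y (-(β * y t * (b ⬝ᵥ x t))) t) :
    HasDerivAt (arinoInvariant β c Pv x y) 0 t := by
  have hmass : HasDerivAt (fun s => y s • Pv + x s) (-(V *ᵥ x t)) t :=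
    ((hy.smul_const Pv).add hx).congr_deriv (by rw [neg_smul]; abel)
  refine ((hy.log hyt).sub ((hmass.const_dotProduct c).const_mul β)).congr_deriv ?_
  rw [dotProduct_neg, dotProduct_mulVec, hc]
  field_simp
  ring

theorem arino_integration_identity_general (n : ℕ)
    (V : Matrix (Fin n) (Fin n) ℝ) (hV : IsUnit V.det)
    (Pv b : Fin n → ℝ) (β T : ℝ)
    (x : ℝ → Fin n → ℝ) (y : ℝ → ℝ)
    (hypos : ∀ t ∈ Set.Icc (0 : ℝ) T, 0 < y t)
    (hx : ∀ t ∈ Set.Icc (0 : ℝ) T, HasDerivAt x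
        ((β * y t * (b ⬝ᵥ x t)) • Pv - V.mulVec (x t)) t)
    (hy : ∀ t ∈ Set.Icc (0 : ℝ) T, HasDerivAt y (-(β * y t * (b ⬝ᵥ x t))) t) :
    ∀ t ∈ Set.Icc (0 : ℝ) T,
      Real.log (y t / y 0)
        = -(β * (b ⬝ᵥ V⁻¹.mulVec ((y 0 - y t) • Pv + (x 0 - x t)))) := by
  intro t ht
  have hc : (b ᵥ* V⁻¹) ᵥ* V = b := by rw [vecMul_vecMul, nonsing_inv_mul V hV, vecMul_one]
  have hinv : arinoInvariant β (b ᵥ* V⁻¹) Pv x y t = arinoInvariant β (b ᵥ* V⁻¹) Pv x y 0 :=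
    eq_of_forall_hasDerivAt_zero_Icc
      (fun s hs => hasDerivAt_arinoInvariant hc (hypos s hs).ne' (hx s hs) (hy s hs)) t ht
  unfold arinoInvariant at hinv
  rw [Real.log_div (hypos t ht).ne' (hypos 0 ⟨le_rfl, ht.1.trans ht.2⟩).ne', dotProduct_mulVec]
  simp only [sub_smul, dotProduct_add, dotProduct_sub] at hinv ⊢
  linarith

/-- Integration identity of Arino et al. (Appendix C.2): for epidemic systems of the
form `x' = β·y·(b⋅x)·Π − V·x`, `y' = −β·y·(b⋅x)`, one has
`log(y(t)/y(0)) = −β·b⋅V⁻¹·(Π·(y(0) − y(t)) + (x(0) − x(t)))`. -/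
theorem arino_integration_identity (n : ℕ) (hn : 1 ≤ n)
    (V : Matrix (Fin n) (Fin n) ℝ) (hV : IsUnit V.det)
    (Pv b : Fin n → ℝ) (β T : ℝ) (hT : 0 < T)
    (x : ℝ → Fin n → ℝ) (y : ℝ → ℝ)
    (hypos : ∀ t ∈ Set.Icc (0 : ℝ) T, 0 < y t)
    (hx : ∀ t ∈ Set.Icc (0 : ℝ) T, HasDerivAt x
        ((β * y t * (b ⬝ᵥ x t)) • Pv - V.mulVec (x t)) t)
    (hy : ∀ t ∈ Set.Icc (0 : ℝ) T, HasDerivAt y (-(β * y t * (b ⬝ᵥ x t))) t) :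
    ∀ t ∈ Set.Icc (0 : ℝ) T,
      Real.log (y t / y 0)
        = -(β * (b ⬝ᵥ V⁻¹.mulVec ((y 0 - y t) • Pv + (x 0 - x t)))) :=
  arino_integration_identity_general n V hV Pv b β T x y hypos hx hy
end

section
/- Let β_C, β_H, γ, η > 0, δ ≥ 0, μ_C, μ_H ≥ 0, α_S > 0, α_I ≥ 0, and define ℛ_0 = β_C·μ_C/(β_C+γ+δ) + β_H·μ_H·η/((β_H+γ)(η+γ)). Suppose S, Q_C, Q_H, Q̃_H : [0,∞) → ℝ are differentiable with S(t) > 0 for all t ≥ 0, and satisfy: S' = −(β_C·Q_C + β_H·Q_H)·S; Q_C' = μ_C·(β_C·Q_C + β_H·Q_H)·S − (β_C+γ+δ)·Q_C; Q_H' = −(β_H+γ)·Q_H + η·Q̃_H; Q̃_H' = μ_H·(β_C·Q_C + β_H·Q_H)·S − (η+γ)·Q̃_H; with S(0) = α_S, Q_C(0) = μ_C·α_I, Q_H(0) = 0, Q̃_H(0) = μ_H·α_I. Suppose further that as t → ∞, S(t) → S_∞ for some S_∞ > 0, and Q_C(t) → 0, Q_H(t) → 0, Q̃_H(t) → 0.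 Then log(S_∞/α_S) = −ℛ_0·(α_S + α_I − S_∞). -/
/-!
The quantity `log S - (β_C/a) Q_C - (β_H/b) Q_H - (β_H η/(b c)) Q̃_H - ℛ₀ S`, with
`a = β_C + γ + δ`, `b = β_H + γ`, `c = η + γ`, is a first integral of the system: the weights
are chosen so that the linear decay terms of the `Q`'s cancel the force of infection in
`(log S)' = -(β_C Q_C + β_H Q_H)`, and then the infection terms `(β_C Q_C + β_H Q_H) S` cancel
against `ℛ₀ S'`. Comparing its value at `t = 0` with its limit at `t → ∞`, where the `Q`'s
vanish, gives the final size relation.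
-/

open Filter Topology

theorem eq_of_hasDerivAt_zero_of_tendsto {F : ℝ → ℝ} {a L : ℝ}
    (hF : ∀ t, a ≤ t → HasDerivAt F 0 t) (hlim : Tendsto F atTop (𝓝 L)) : F a = L := by
  have hconst : ∀ t, a ≤ t → F t = F a := fun t ht =>
    constant_of_has_deriv_right_zero
      (fun x hx => (hF x hx.1).continuousAt.continuousWithinAt)
      (fun x hx => (hF x hx.1).hasDerivWithinAt) t (Set.right_mem_Icc.mpr ht)
  refine tendsto_nhds_unique ?_ hlim
  exact tendsto_const_nhds.congr' <|
    (eventually_ge_atTop a).mono fun t ht => (hconst t ht).symm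

namespace CommunityHealthcare

variable (βC βH γ η δ μC μH : ℝ)

noncomputable def basicReproductionNumber : ℝ :=
  βC * μC / (βC + γ + δ) + βH * μH * η / ((βH + γ) * (η + γ))

noncomputable def firstIntegral (S QC QH QtH : ℝ) : ℝ :=
  Real.log S - βC / (βC + γ + δ) * QC - βH / (βH + γ) * QH
    - βH * η / ((βH + γ) * (η + γ)) * QtH
    - basicReproductionNumber βC βH γ η δ μC μH * S

theorem firstIntegral_initial (αS αI : ℝ) :
    firstIntegral βC βH γ η δ μC μH αS (μC * αI) 0 (μH * αI)
      = Real.log αS - basicReproductionNumber βC βH γ η δ μC μH * (αS + αI) := by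
  unfold firstIntegral basicReproductionNumber
  ring

theorem firstIntegral_final (Sinf : ℝ) :
    firstIntegral βC βH γ η δ μC μH Sinf 0 0 0
      = Real.log Sinf - basicReproductionNumber βC βH γ η δ μC μH * Sinf := by
  simp only [firstIntegral, mul_zero, sub_zero]

theorem hasDerivAt_firstIntegral {S QC QH QtH : ℝ → ℝ} {t : ℝ}
    (ha : βC + γ + δ ≠ 0) (hb : βH + γ ≠ 0) (hc : η + γ ≠ 0) (hSt : S t ≠ 0)
    (hS : HasDerivAt S (-((βC * QC t + βH * QH t) * S t)) t)
    (hQC : HasDerivAt QC (μC * (βC * QC t + βH * QH t) * S t - (βC + γ + δ) * QC t) t)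
    (hQH : HasDerivAt QH (-((βH + γ) * QH t) + η * QtH t) t)
    (hQtH : HasDerivAt QtH (μH * (βC * QC t + βH * QH t) * S t - (η + γ) * QtH t) t) :
    HasDerivAt (fun s => firstIntegral βC βH γ η δ μC μH (S s) (QC s) (QH s) (QtH s)) 0 t := by
  have h := ((((hS.log hSt).sub (hQC.const_mul (βC / (βC + γ + δ)))).sub
    (hQH.const_mul (βH / (βH + γ)))).sub
    (hQtH.const_mul (βH * η / ((βH + γ) * (η + γ))))).sub
    (hS.const_mul (basicReproductionNumber βC βH γ η δ μC μH))
  refine h.congr_deriv ?_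
  unfold basicReproductionNumber
  field_simp
  ring

theorem tendsto_firstIntegral {S QC QH QtH : ℝ → ℝ} {Sinf : ℝ} (hSinf : Sinf ≠ 0)
    (hS : Tendsto S atTop (𝓝 Sinf)) (hQC : Tendsto QC atTop (𝓝 0))
    (hQH : Tendsto QH atTop (𝓝 0)) (hQtH : Tendsto QtH atTop (𝓝 0)) :
    Tendsto (fun t => firstIntegral βC βH γ η δ μC μH (S t) (QC t) (QH t) (QtH t)) atTop
      (𝓝 (firstIntegral βC βH γ η δ μC μH Sinf 0 0 0)) :=
  (((((Real.continuousAt_log hSinf).tendsto.comp hS).sub (hQC.const_mul _)).sub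
    (hQH.const_mul _)).sub (hQtH.const_mul _)).sub (hS.const_mul _)

end CommunityHealthcare

open CommunityHealthcare

theorem community_healthcare_final_size_general (βC βH γ η δ μC μH αS αI Sinf : ℝ)
    (hβC : 0 < βC) (hβH : 0 < βH) (hγ : 0 < γ) (hη : 0 < η) (hδ : 0 ≤ δ)
    (hαS : 0 < αS)
    (S QC QH QtH : ℝ → ℝ)
    (hSpos : ∀ t : ℝ, 0 ≤ t → 0 < S t)
    (hS : ∀ t : ℝ, 0 ≤ t → HasDerivAt S (-((βC * QC t + βH * QH t) * S t)) t)
    (hQC : ∀ t : ℝ, 0 ≤ t → HasDerivAt QC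
        (μC * (βC * QC t + βH * QH t) * S t - (βC + γ + δ) * QC t) t)
    (hQH : ∀ t : ℝ, 0 ≤ t → HasDerivAt QH (-((βH + γ) * QH t) + η * QtH t) t)
    (hQtH : ∀ t : ℝ, 0 ≤ t → HasDerivAt QtH
        (μH * (βC * QC t + βH * QH t) * S t - (η + γ) * QtH t) t)
    (hS0 : S 0 = αS) (hQC0 : QC 0 = μC * αI) (hQH0 : QH 0 = 0)
    (hQtH0 : QtH 0 = μH * αI)
    (hSinf : 0 < Sinf)
    (hSlim : Filter.Tendsto S Filter.atTop (nhds Sinf))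
    (hQClim : Filter.Tendsto QC Filter.atTop (nhds 0))
    (hQHlim : Filter.Tendsto QH Filter.atTop (nhds 0))
    (hQtHlim : Filter.Tendsto QtH Filter.atTop (nhds 0)) :
    Real.log (Sinf / αS)
      = -((βC * μC / (βC + γ + δ) + βH * μH * η / ((βH + γ) * (η + γ)))
            * (αS + αI - Sinf)) := by
  have hconserved := eq_of_hasDerivAt_zero_of_tendsto
    (fun t ht => hasDerivAt_firstIntegral βC βH γ η δ μC μH (by positivity) (by positivity)
      (by positivity) (hSpos t ht).ne' (hS t ht) (hQC t ht) (hQH t ht) (hQtH t ht))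
    (tendsto_firstIntegral βC βH γ η δ μC μH hSinf.ne' hSlim hQClim hQHlim hQtHlim)
  rw [hS0, hQC0, hQH0, hQtH0, firstIntegral_initial, firstIntegral_final] at hconserved
  rw [Real.log_div hSinf.ne' hαS.ne']
  change _ = -(basicReproductionNumber βC βH γ η δ μC μH * _)
  linarith

/-- Final size relation (CHfinal) of the community-healthcare model in the case of
independent layers with Poisson degree distributions: if `S(t) → S_∞ > 0` and the
infected dyad densities tend to zero, then `log(S_∞/α_S) = −ℛ₀·(α_S + α_I − S_∞)`. -/
theorem community_healthcare_final_size (βC βH γ η δ μC μH αS αI Sinf : ℝ)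
    (hβC : 0 < βC) (hβH : 0 < βH) (hγ : 0 < γ) (hη : 0 < η) (hδ : 0 ≤ δ)
    (hμC : 0 ≤ μC) (hμH : 0 ≤ μH) (hαS : 0 < αS) (hαI : 0 ≤ αI)
    (S QC QH QtH : ℝ → ℝ)
    (hSpos : ∀ t : ℝ, 0 ≤ t → 0 < S t)
    (hS : ∀ t : ℝ, 0 ≤ t → HasDerivAt S (-((βC * QC t + βH * QH t) * S t)) t)
    (hQC : ∀ t : ℝ, 0 ≤ t → HasDerivAt QC
        (μC * (βC * QC t + βH * QH t) * S t - (βC + γ + δ) * QC t) t)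
    (hQH : ∀ t : ℝ, 0 ≤ t → HasDerivAt QH (-((βH + γ) * QH t) + η * QtH t) t)
    (hQtH : ∀ t : ℝ, 0 ≤ t → HasDerivAt QtH
        (μH * (βC * QC t + βH * QH t) * S t - (η + γ) * QtH t) t)
    (hS0 : S 0 = αS) (hQC0 : QC 0 = μC * αI) (hQH0 : QH 0 = 0)
    (hQtH0 : QtH 0 = μH * αI)
    (hSinf : 0 < Sinf)
    (hSlim : Filter.Tendsto S Filter.atTop (nhds Sinf))
    (hQClim : Filter.Tendsto QC Filter.atTop (nhds 0))
    (hQHlim : Filter.Tendsto QH Filter.atTop (nhds 0))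
    (hQtHlim : Filter.Tendsto QtH Filter.atTop (nhds 0)) :
    Real.log (Sinf / αS)
      = -((βC * μC / (βC + γ + δ) + βH * μH * η / ((βH + γ) * (η + γ)))
            * (αS + αI - Sinf)) :=
  community_healthcare_final_size_general βC βH γ η δ μC μH αS αI Sinf hβC hβH hγ hη hδ hαS S QC QH
    QtH hSpos hS hQC hQH hQtH hS0 hQC0 hQH0 hQtH0 hSinf hSlim hQClim hQHlim hQtHlim
end

section
/- Let β_C, β_H > 0, κ_CC, κ_HH, κ_CH ∈ ℝ with κ_CH ≠ κ_CC, μ_C > 0, μ_H ≥ 0, α_S > 0 and T > 0. Define σ = (κ_HH − κ_CH)/(κ_CH − κ_CC) and λ = (κ_CH² − κ_CC·κ_HH)/(κ_CH − κ_CC). Suppose S, SSC, SSH : [0,T] → ℝ are differentiable with S(t) > 0 and SSC(t) > 0 for all t ∈ [0,T], SI_C, SI_H : [0,T] → ℝ, and: S' = −β_C·SI_C − β_H·SI_H; SSC' = −2·(β_C·κ_CC·SI_C + β_H·κ_CH·SI_H)·SSC/S; SSH' = −2·(β_C·κ_CH·SI_C + β_H·κ_HH·SI_H)·SSH/S; with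 S(0) = α_S, SSC(0) = μ_C·α_S², SSH(0) = μ_H·α_S². Then for all t ∈ [0,T] (real powers): SSH(t) = (μ_H·α_S^{2(1−σ−λ)}/μ_C^{σ})·SSC(t)^{σ}·S(t)^{2λ}. -/
/-!
The three susceptible quantities evolve log-linearly in the same two forcing terms
`β_C [SI]_C / S` and `β_H [SI]_H / S`. The choice of `σ` and `λ` makes
`κ_CH = σ κ_CC + λ` and `κ_HH = σ κ_CH + λ`, so that
`[S̃S]_H' / [S̃S]_H = σ [SS]_C' / [SS]_C + 2λ S' / S`. Hence
`[S̃S]_H · [SS]_C^(-σ) · S^(-2λ)` has zero derivative, and its value at `t = 0` is the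
constant of the invariant. Writing the relation multiplicatively keeps it valid when
`[S̃S]_H` vanishes (`μ_H = 0`).
-/

open Set

section LogLinear

variable {x y z : ℝ → ℝ} {p q : ℝ}

theorem hasDerivAt_mul_rpow_neg_eq_zero {x' y' z' t : ℝ}
    (hx : HasDerivAt x x' t) (hy : HasDerivAt y y' t) (hz : HasDerivAt z z' t)
    (hxt : 0 < x t) (hyt : 0 < y t) (hz' : z' = (p * x' / x t + q * y' / y t) * z t) :
    HasDerivAt (fun u => z u * x u ^ (-p) * y u ^ (-q)) 0 t := by
  refine ((hz.mul (hx.rpow_const (p := -p) (Or.inl hxt.ne'))).mul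
    (hy.rpow_const (p := -q) (Or.inl hyt.ne'))).congr_deriv ?_
  simp only [Pi.mul_apply]
  rw [Real.rpow_sub hxt, Real.rpow_sub hyt, Real.rpow_one, Real.rpow_one, hz']
  field_simp
  ring

theorem eq_mul_rpow_mul_rpow_of_hasDerivAt {a b : ℝ} {x' y' z' : ℝ → ℝ}
    (hx : ∀ t ∈ Icc a b, HasDerivAt x (x' t) t) (hy : ∀ t ∈ Icc a b, HasDerivAt y (y' t) t)
    (hz : ∀ t ∈ Icc a b, HasDerivAt z (z' t) t)
    (hxpos : ∀ t ∈ Icc a b, 0 < x t) (hypos : ∀ t ∈ Icc a b, 0 < y t)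
    (hz' : ∀ t ∈ Icc a b, z' t = (p * x' t / x t + q * y' t / y t) * z t) :
    ∀ t ∈ Icc a b, z t = z a * (x t / x a) ^ p * (y t / y a) ^ q := by
  intro t ht
  have ha : a ∈ Icc a b := ⟨le_rfl, ht.1.trans ht.2⟩
  have hF : ∀ s ∈ Icc a b, HasDerivAt (fun u => z u * x u ^ (-p) * y u ^ (-q)) 0 s :=
    fun s hs => hasDerivAt_mul_rpow_neg_eq_zero (hx s hs) (hy s hs) (hz s hs)
      (hxpos s hs) (hypos s hs) (hz' s hs)
  have hconst := constant_of_has_deriv_right_zero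
    (fun s hs => (hF s hs).continuousAt.continuousWithinAt)
    (fun s hs => (hF s (Ico_subset_Icc_self hs)).hasDerivWithinAt) t ht
  have hxt := hxpos t ht
  have hyt := hypos t ht
  have hxa := hxpos a ha
  have hya := hypos a ha
  simp only [Real.rpow_neg hxt.le, Real.rpow_neg hyt.le, Real.rpow_neg hxa.le,
    Real.rpow_neg hya.le] at hconst
  rw [Real.div_rpow hxt.le hxa.le, Real.div_rpow hyt.le hya.le]
  field_simp at hconst ⊢
  linear_combination hconst

end LogLinear

theorem mul_sq_mul_div_rpow_mul_div_rpow {μC αS c s : ℝ} (μH σ l : ℝ)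
    (hμC : 0 < μC) (hαS : 0 < αS) (hc : 0 ≤ c) (hs : 0 ≤ s) :
    μH * αS ^ 2 * (c / (μC * αS ^ 2)) ^ σ * (s / αS) ^ (2 * l)
      = μH * αS ^ (2 * (1 - σ - l)) / μC ^ σ * c ^ σ * s ^ (2 * l) := by
  have hα2 : αS ^ 2 = αS ^ (2 : ℝ) := (Real.rpow_natCast αS 2).symm
  rw [Real.div_rpow hc (by positivity), Real.div_rpow hs hαS.le,
    Real.mul_rpow hμC.le (by positivity), hα2, ← Real.rpow_mul hαS.le,
    show 2 * (1 - σ - l) = 2 - 2 * σ - 2 * l by ring,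
    Real.rpow_sub hαS, Real.rpow_sub hαS]
  field_simp

theorem community_healthcare_SSH_invariant_general (βC βH κCC κHH κCH μC μH αS T : ℝ)
    (hne : κCH ≠ κCC) (hμC : 0 < μC)
    (hαS : 0 < αS)
    (S SSC SSH SIC SIH : ℝ → ℝ)
    (hSpos : ∀ t ∈ Set.Icc (0 : ℝ) T, 0 < S t)
    (hSSCpos : ∀ t ∈ Set.Icc (0 : ℝ) T, 0 < SSC t)
    (hS : ∀ t ∈ Set.Icc (0 : ℝ) T, HasDerivAt S (-(βC * SIC t) - βH * SIH t) t)
    (hSSC : ∀ t ∈ Set.Icc (0 : ℝ) T, HasDerivAt SSC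
        (-2 * (βC * κCC * SIC t + βH * κCH * SIH t) * SSC t / S t) t)
    (hSSH : ∀ t ∈ Set.Icc (0 : ℝ) T, HasDerivAt SSH
        (-2 * (βC * κCH * SIC t + βH * κHH * SIH t) * SSH t / S t) t)
    (hS0 : S 0 = αS) (hSSC0 : SSC 0 = μC * αS ^ 2) (hSSH0 : SSH 0 = μH * αS ^ 2) :
    ∀ t ∈ Set.Icc (0 : ℝ) T,
      SSH t = μH * αS ^ (2 * (1 - (κHH - κCH) / (κCH - κCC)
                - (κCH ^ 2 - κCC * κHH) / (κCH - κCC)))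
          / μC ^ ((κHH - κCH) / (κCH - κCC))
          * SSC t ^ ((κHH - κCH) / (κCH - κCC))
          * S t ^ (2 * ((κCH ^ 2 - κCC * κHH) / (κCH - κCC))) := by
  have hΔ : κCH - κCC ≠ 0 := sub_ne_zero.mpr hne
  set σ := (κHH - κCH) / (κCH - κCC) with hσ
  set l := (κCH ^ 2 - κCC * κHH) / (κCH - κCC) with hl
  have hCH : κCH = σ * κCC + l := by rw [hσ, hl]; field_simp; ring
  have hHH : κHH = σ * κCH + l := by rw [hσ, hl]; field_simp; ring
  have hrate : ∀ s ∈ Icc 0 T,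
      -2 * (βC * κCH * SIC s + βH * κHH * SIH s) * SSH s / S s
        = (σ * (-2 * (βC * κCC * SIC s + βH * κCH * SIH s) * SSC s / S s) / SSC s
          + 2 * l * (-(βC * SIC s) - βH * SIH s) / S s) * SSH s := by
    intro s hs
    have := (hSSCpos s hs).ne'
    field_simp
    rw [hHH, hCH]
    ring
  intro t ht
  have hsol := eq_mul_rpow_mul_rpow_of_hasDerivAt hSSC hS hSSH hSSCpos hSpos hrate t ht
  rw [hsol, hSSH0, hSSC0, hS0]
  exact mul_sq_mul_div_rpow_mul_div_rpow μH σ l hμC hαS (hSSCpos t ht).le (hSpos t ht).le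

/-- Invariant (inv1) of the community-healthcare limiting system: when `κ_CH ≠ κ_CC`,
with `σ = (κ_HH − κ_CH)/(κ_CH − κ_CC)` and `λ = (κ_CH² − κ_CC·κ_HH)/(κ_CH − κ_CC)`,
the dyad density `[S̃S]_H` satisfies
`SSH = (μ_H·α_S^(2(1−σ−λ))/μ_C^σ)·SSC^σ·S^(2λ)` (real powers). -/
theorem community_healthcare_SSH_invariant (βC βH κCC κHH κCH μC μH αS T : ℝ)
    (hβC : 0 < βC) (hβH : 0 < βH) (hne : κCH ≠ κCC) (hμC : 0 < μC) (hμH : 0 ≤ μH)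
    (hαS : 0 < αS) (hT : 0 < T)
    (S SSC SSH SIC SIH : ℝ → ℝ)
    (hSpos : ∀ t ∈ Set.Icc (0 : ℝ) T, 0 < S t)
    (hSSCpos : ∀ t ∈ Set.Icc (0 : ℝ) T, 0 < SSC t)
    (hS : ∀ t ∈ Set.Icc (0 : ℝ) T, HasDerivAt S (-(βC * SIC t) - βH * SIH t) t)
    (hSSC : ∀ t ∈ Set.Icc (0 : ℝ) T, HasDerivAt SSC
        (-2 * (βC * κCC * SIC t + βH * κCH * SIH t) * SSC t / S t) t)
    (hSSH : ∀ t ∈ Set.Icc (0 : ℝ) T, HasDerivAt SSH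
        (-2 * (βC * κCH * SIC t + βH * κHH * SIH t) * SSH t / S t) t)
    (hS0 : S 0 = αS) (hSSC0 : SSC 0 = μC * αS ^ 2) (hSSH0 : SSH 0 = μH * αS ^ 2) :
    ∀ t ∈ Set.Icc (0 : ℝ) T,
      SSH t = μH * αS ^ (2 * (1 - (κHH - κCH) / (κCH - κCC)
                - (κCH ^ 2 - κCC * κHH) / (κCH - κCC)))
          / μC ^ ((κHH - κCH) / (κCH - κCC))
          * SSC t ^ ((κHH - κCH) / (κCH - κCC))
          * S t ^ (2 * ((κCH ^ 2 - κCC * κHH) / (κCH - κCC))) :=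
  community_healthcare_SSH_invariant_general βC βH κCC κHH κCH μC μH αS T hne hμC hαS S SSC SSH SIC
    SIH hSpos hSSCpos hS hSSC hSSH hS0 hSSC0 hSSH0
end
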